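/- arXiv:2003.12369 — 2 statements merged into one kernel-verified Lean document; each statement's English description precedes it below -/
import Mathlib

section
/- Let X be a Banach space, J: X × X → ℝ with J(w,·) locally Lipschitz for every w ∈ X, and m_{J1}, m_{J2} ≥ 0. Then the following are equivalent: (i) J₂⁰(w₁,v₁; v₂−v₁) + J₂⁰(w₂,v₂; v₁−v₂) ≤ m_{J1}‖v₁−v₂‖_X² + m_{J2}‖w₁−w₂‖_X‖v₁−v₂‖_X for all w₁,w₂,v₁,v₂ ∈ X; (ii) for all w₁,w₂,v₁,v₂ ∈ X and all ξ₁ ∈ ∂₂J(w₁,v₁), ξ₂ ∈ ∂₂J(w₂,v₂): ⟨ξ₁ − ξ₂, v₁ − v₂⟩ ≥ −m_{J1}‖v₁−v₂‖_X² − m_{J2}‖w₁−w₂‖_X‖v₁−v₂‖_X. -/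
open Filter MeasureTheory Set

noncomputable def clarkeDeriv {Y : Type*} [NormedAddCommGroup Y] [NormedSpace ℝ Y]
    (φ : Y → ℝ) (y z : Y) : ℝ :=
  Filter.limsup (fun p : Y × ℝ => (φ (p.1 + p.2 • z) - φ p.1) / p.2)
    ((nhds y) ×ˢ (nhdsWithin 0 (Set.Ioi 0)))

def clarkeSubdiff {Y : Type*} [NormedAddCommGroup Y] [NormedSpace ℝ Y]
    (φ : Y → ℝ) (y : Y) : Set (Y →L[ℝ] ℝ) :=
  {ξ | ∀ z, ξ z ≤ clarkeDeriv φ y z}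

/-!
(i) ⇒ (ii) is immediate, since every `ξ ∈ ∂₂J(w, v)` satisfies `ξ ≤ J₂⁰(w, v; ·)`.
For (ii) ⇒ (i), the map `z ↦ J₂⁰(w, v; z)` is sublinear and bounded by `K ‖z‖`, with `K` a local
Lipschitz constant of `J w` near `v`. By the Hahn–Banach theorem it therefore dominates a continuous
linear functional `ξ`, i.e. an element of `∂₂J(w, v)`, that agrees with it in any prescribed
direction; choosing `ξ₁, ξ₂` this way in the directions `v₂ - v₁` and `v₁ - v₂` turns (ii) into (i).
-/

open Topology

theorem map_mul_left_nhdsGT_zero {𝕜 : Type*} [Field 𝕜] [LinearOrder 𝕜] [IsStrictOrderedRing 𝕜]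
    [TopologicalSpace 𝕜] [OrderTopology 𝕜] {c : 𝕜} (hc : 0 < c) :
    map (c * ·) (𝓝[>] 0) = 𝓝[>] 0 := by
  conv_lhs => rw [← comap_mulLeft_nhdsGT_zero hc]
  exact map_comap_of_surjective (mul_left_surjective₀ hc.ne') _

theorem isBoundedUnder_le_ge_of_eventually_abs_le {α : Type*} {l : Filter α} {u : α → ℝ} {C : ℝ}
    (h : ∀ᶠ a in l, |u a| ≤ C) :
    IsBoundedUnder (· ≤ ·) l u ∧ IsBoundedUnder (· ≥ ·) l u :=
  isBoundedUnder_le_abs.1 (isBoundedUnder_of_eventually_le h)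

section HahnBanach

variable {E : Type*}

theorem exists_linearMap_le_apply_eq [AddCommGroup E] [Module ℝ E] (N : E → ℝ)
    (N_hom : ∀ c : ℝ, 0 < c → ∀ x, N (c • x) = c * N x) (N_add : ∀ x y, N (x + y) ≤ N x + N y)
    (z : E) : ∃ f : E →ₗ[ℝ] ℝ, (∀ x, f x ≤ N x) ∧ f z = N z := by
  have N_zero : N 0 = 0 := by
    have := N_hom 2 two_pos 0
    rw [smul_zero] at this
    linarith
  have N_neg : 0 ≤ N z + N (-z) := by simpa [N_zero] using N_add z (-z)
  have hker : ∀ c : ℝ, c • z = 0 → c • N z = 0 := by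
    intro c hcz
    rcases smul_eq_zero.1 hcz with rfl | rfl
    · exact zero_smul ℝ _
    · rw [N_zero, smul_zero]
  set f₀ := LinearPMap.mkSpanSingleton' (σ := RingHom.id ℝ) z (N z) hker
  have hf₀ : ∀ x : f₀.domain, f₀ x ≤ N x := by
    rintro ⟨x, hx⟩
    obtain ⟨t, rfl⟩ := Submodule.mem_span_singleton.1 hx
    rw [LinearPMap.mkSpanSingleton'_apply, RingHom.id_apply, smul_eq_mul]
    change t * N z ≤ N (t • z)
    rcases lt_trichotomy t 0 with ht | rfl | ht
    · rw [show t • z = (-t) • -z by simp, N_hom (-t) (neg_pos.2 ht)]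
      nlinarith
    · simp [N_zero]
    · rw [N_hom t ht]
  obtain ⟨f, hf_ext, hf_le⟩ := exists_extension_of_le_sublinear f₀ N N_hom N_add hf₀
  refine ⟨f, hf_le, ?_⟩
  have hz : z ∈ f₀.domain := Submodule.mem_span_singleton_self z
  rw [hf_ext ⟨z, hz⟩, LinearPMap.mkSpanSingleton'_apply_self]

theorem exists_continuousLinearMap_le_apply_eq [NormedAddCommGroup E] [NormedSpace ℝ E]
    (N : E → ℝ) (N_hom : ∀ c : ℝ, 0 < c → ∀ x, N (c • x) = c * N x)
    (N_add : ∀ x y, N (x + y) ≤ N x + N y) {K : ℝ} (N_le : ∀ x, N x ≤ K * ‖x‖) (z : E) :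
    ∃ ξ : E →L[ℝ] ℝ, (∀ x, ξ x ≤ N x) ∧ ξ z = N z := by
  obtain ⟨f, hf_le, hfz⟩ := exists_linearMap_le_apply_eq N N_hom N_add z
  have hf_bound : ∀ x, ‖f x‖ ≤ K * ‖x‖ := by
    intro x
    rw [Real.norm_eq_abs, abs_le]
    constructor
    · have := (hf_le (-x)).trans (N_le (-x))
      rw [map_neg, norm_neg] at this
      linarith
    · exact (hf_le x).trans (N_le x)
  exact ⟨f.mkContinuous K hf_bound, hf_le, hfz⟩

end HahnBanach

section Clarke

variable {Y : Type*} [NormedAddCommGroup Y] [NormedSpace ℝ Y] {φ : Y → ℝ}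

noncomputable def diffQuot (φ : Y → ℝ) (z : Y) (p : Y × ℝ) : ℝ :=
  (φ (p.1 + p.2 • z) - φ p.1) / p.2

theorem clarkeDeriv_eq_limsup_diffQuot (y z : Y) :
    clarkeDeriv φ y z = limsup (diffQuot φ z) (𝓝 y ×ˢ 𝓝[>] 0) :=
  rfl

theorem tendsto_fst_add_snd_smul (y z : Y) :
    Tendsto (fun p : Y × ℝ => p.1 + p.2 • z) (𝓝 y ×ˢ 𝓝[>] 0) (𝓝 y) := by
  have h := (tendsto_fst (f := 𝓝 y)).add
    ((tendsto_snd (f := 𝓝 y) (g := 𝓝[>] (0 : ℝ))).mono_right nhdsWithin_le_nhds |>.smul_const z)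
  simpa using h

theorem LocallyLipschitz.exists_eventually_abs_diffQuot_le (hφ : LocallyLipschitz φ) (y : Y) :
    ∃ K : ℝ, ∀ z, ∀ᶠ p in 𝓝 y ×ˢ 𝓝[>] 0, |diffQuot φ z p| ≤ K * ‖z‖ := by
  obtain ⟨K, U, hU, hlip⟩ := hφ y
  refine ⟨K, fun z => ?_⟩
  filter_upwards [tendsto_fst.eventually hU, (tendsto_fst_add_snd_smul y z).eventually hU,
    tendsto_snd.eventually self_mem_nhdsWithin] with p hp₁ hp₂ (ht : 0 < p.2)
  have hdist := hlip.dist_le_mul _ hp₂ _ hp₁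
  rw [Real.dist_eq, dist_eq_norm, add_sub_cancel_left, norm_smul, Real.norm_of_nonneg ht.le]
    at hdist
  rw [diffQuot, abs_div, abs_of_pos ht, div_le_iff₀ ht]
  linarith

theorem LocallyLipschitz.exists_clarkeDeriv_le_mul_norm (hφ : LocallyLipschitz φ) (y : Y) :
    ∃ K : ℝ, ∀ z, clarkeDeriv φ y z ≤ K * ‖z‖ := by
  obtain ⟨K, hK⟩ := hφ.exists_eventually_abs_diffQuot_le y
  refine ⟨K, fun z => ?_⟩
  have hge := (isBoundedUnder_le_ge_of_eventually_abs_le (hK z)).2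
  exact limsup_le_of_le hge.isCoboundedUnder_le ((hK z).mono fun p hp => (abs_le.1 hp).2)

theorem LocallyLipschitz.clarkeDeriv_add_le (hφ : LocallyLipschitz φ) (y z₁ z₂ : Y) :
    clarkeDeriv φ y (z₁ + z₂) ≤ clarkeDeriv φ y z₁ + clarkeDeriv φ y z₂ := by
  obtain ⟨K, hK⟩ := hφ.exists_eventually_abs_diffQuot_le y
  let T : Y × ℝ → Y × ℝ := fun p => (p.1 + p.2 • z₂, p.2)
  have hT : Tendsto T (𝓝 y ×ˢ 𝓝[>] 0) (𝓝 y ×ˢ 𝓝[>] 0) :=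
    (tendsto_fst_add_snd_smul y z₂).prodMk tendsto_snd
  have hsplit : diffQuot φ (z₁ + z₂) = diffQuot φ z₁ ∘ T + diffQuot φ z₂ := by
    funext p
    have hshift : p.1 + p.2 • z₂ + p.2 • z₁ = p.1 + p.2 • (z₁ + z₂) := by
      rw [smul_add]
      abel
    simp only [diffQuot, T, Function.comp, Pi.add_apply, hshift]
    ring
  obtain ⟨hT_le, hT_ge⟩ := isBoundedUnder_le_ge_of_eventually_abs_le (hT.eventually (hK z₁))
  obtain ⟨h₁_le, -⟩ := isBoundedUnder_le_ge_of_eventually_abs_le (hK z₁)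
  obtain ⟨h₂_le, h₂_ge⟩ := isBoundedUnder_le_ge_of_eventually_abs_le (hK z₂)
  rw [clarkeDeriv_eq_limsup_diffQuot, hsplit]
  calc _ ≤ limsup (diffQuot φ z₁ ∘ T) (𝓝 y ×ˢ 𝓝[>] 0) + limsup (diffQuot φ z₂) _ :=
        limsup_add_le hT_ge hT_le h₂_ge.isCoboundedUnder_le h₂_le
    _ ≤ _ := add_le_add (hT.limsup_comp_le_limsup hT_ge.isCoboundedUnder_le h₁_le) le_rfl

theorem LocallyLipschitz.clarkeDeriv_smul (hφ : LocallyLipschitz φ) (y z : Y) {c : ℝ}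
    (hc : 0 < c) : clarkeDeriv φ y (c • z) = c * clarkeDeriv φ y z := by
  obtain ⟨K, hK⟩ := hφ.exists_eventually_abs_diffQuot_le y
  let S : Y × ℝ → Y × ℝ := Prod.map id (c * ·)
  have hS : map S (𝓝 y ×ˢ 𝓝[>] 0) = 𝓝 y ×ˢ 𝓝[>] 0 := by
    rw [← prod_map_map_eq', map_id, map_mul_left_nhdsGT_zero hc]
  have hscale : diffQuot φ (c • z) = (c * ·) ∘ diffQuot φ z ∘ S := by
    funext p
    simp only [diffQuot, S, Function.comp, Prod.map, id, smul_smul, mul_comm p.2 c]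
    rcases eq_or_ne p.2 0 with h0 | h0
    · simp [h0]
    · field_simp
  have hST : Tendsto S (𝓝 y ×ˢ 𝓝[>] 0) (𝓝 y ×ˢ 𝓝[>] 0) := hS.le
  obtain ⟨h_le, h_ge⟩ := isBoundedUnder_le_ge_of_eventually_abs_le (hST.eventually (hK z))
  rw [clarkeDeriv_eq_limsup_diffQuot, clarkeDeriv_eq_limsup_diffQuot, hscale,
    ← (monotone_mul_left_of_nonneg hc.le).map_limsup_of_continuousAt (diffQuot φ z ∘ S)
      (continuous_const_mul c).continuousAt h_le h_ge.isCoboundedUnder_le, limsup_comp, hS]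

theorem LocallyLipschitz.exists_mem_clarkeSubdiff_apply_eq (hφ : LocallyLipschitz φ) (y z : Y) :
    ∃ ξ ∈ clarkeSubdiff φ y, ξ z = clarkeDeriv φ y z := by
  obtain ⟨K, hK⟩ := hφ.exists_clarkeDeriv_le_mul_norm y
  obtain ⟨ξ, hξ_le, hξz⟩ := exists_continuousLinearMap_le_apply_eq (clarkeDeriv φ y)
    (fun c hc x => hφ.clarkeDeriv_smul y x hc) (hφ.clarkeDeriv_add_le y) hK z
  exact ⟨ξ, hξ_le, hξz⟩

end Clarke

theorem HJc_iff_relaxed_monotonicity_general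
    {X : Type*} [NormedAddCommGroup X] [NormedSpace ℝ X]
    (J : X → X → ℝ)
    (hJa : ∀ w : X, LocallyLipschitz (J w))
    (mJ1 mJ2 : ℝ) :
    (∀ w₁ w₂ v₁ v₂ : X,
      clarkeDeriv (J w₁) v₁ (v₂ - v₁) + clarkeDeriv (J w₂) v₂ (v₁ - v₂) ≤
        mJ1 * ‖v₁ - v₂‖ ^ 2 + mJ2 * ‖w₁ - w₂‖ * ‖v₁ - v₂‖) ↔
    (∀ w₁ w₂ v₁ v₂ : X, ∀ ξ₁ ∈ clarkeSubdiff (J w₁) v₁, ∀ ξ₂ ∈ clarkeSubdiff (J w₂) v₂,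
      -(mJ1 * ‖v₁ - v₂‖ ^ 2) - mJ2 * ‖w₁ - w₂‖ * ‖v₁ - v₂‖ ≤ (ξ₁ - ξ₂) (v₁ - v₂)) := by
  have hflip : ∀ ξ : X →L[ℝ] ℝ, ∀ v₁ v₂ : X, ξ (v₂ - v₁) = -ξ (v₁ - v₂) := fun ξ v₁ v₂ => by
    rw [← map_neg, neg_sub]
  constructor
  · intro h w₁ w₂ v₁ v₂ ξ₁ hξ₁ ξ₂ hξ₂
    have h₁ := hξ₁ (v₂ - v₁)
    have h₂ := hξ₂ (v₁ - v₂)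
    rw [sub_apply]
    linarith [h w₁ w₂ v₁ v₂, hflip ξ₁ v₁ v₂]
  · intro h w₁ w₂ v₁ v₂
    obtain ⟨ξ₁, hξ₁, he₁⟩ := (hJa w₁).exists_mem_clarkeSubdiff_apply_eq v₁ (v₂ - v₁)
    obtain ⟨ξ₂, hξ₂, he₂⟩ := (hJa w₂).exists_mem_clarkeSubdiff_apply_eq v₂ (v₁ - v₂)
    have h₁₂ := h w₁ w₂ v₁ v₂ ξ₁ hξ₁ ξ₂ hξ₂
    rw [sub_apply] at h₁₂
    linarith [hflip ξ₁ v₁ v₂]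

/-- Condition H(J)(c) is equivalent to the relaxed-monotonicity condition
for the partial Clarke subdifferential `∂₂J`. -/
theorem HJc_iff_relaxed_monotonicity
    {X : Type*} [NormedAddCommGroup X] [NormedSpace ℝ X] [CompleteSpace X]
    (J : X → X → ℝ)
    (hJa : ∀ w : X, LocallyLipschitz (J w))
    (mJ1 mJ2 : ℝ) (hmJ1 : 0 ≤ mJ1) (hmJ2 : 0 ≤ mJ2) :
    (∀ w₁ w₂ v₁ v₂ : X,
      clarkeDeriv (J w₁) v₁ (v₂ - v₁) + clarkeDeriv (J w₂) v₂ (v₁ - v₂) ≤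
        mJ1 * ‖v₁ - v₂‖ ^ 2 + mJ2 * ‖w₁ - w₂‖ * ‖v₁ - v₂‖) ↔
    (∀ w₁ w₂ v₁ v₂ : X, ∀ ξ₁ ∈ clarkeSubdiff (J w₁) v₁, ∀ ξ₂ ∈ clarkeSubdiff (J w₂) v₂,
      -(mJ1 * ‖v₁ - v₂‖ ^ 2) - mJ2 * ‖w₁ - w₂‖ * ‖v₁ - v₂‖ ≤ (ξ₁ - ξ₂) (v₁ - v₂)) :=
  HJc_iff_relaxed_monotonicity_general J hJa mJ1 mJ2
end

section
/- Let ν ∈ ℝ^d be a unit vector and, for η ∈ ℝ^d, write η_ν = η·ν and η_τ = η − η_ν ν. Let g_ν, g_τ: ℝ → ℝ satisfy 0 ≤ g_ν(r) ≤ ḡ_ν, 0 ≤ g_τ(r) ≤ ḡ_τ, |g_ν(r₁) − g_ν(r₂)| ≤ L_{g_ν}|r₁ − r₂| and |g_τ(r₁) − g_τ(r₂)| ≤ L_{g_τ}|r₁ − r₂| for all r, r₁, r₂ ∈ ℝ. Let j_τ: ℝ^d → ℝ satisfy |j_τ(ξ₁) − j_τ(ξ₂)| ≤ c_τ‖ξ₁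 − ξ₂‖ and j_τ⁰(ξ₁; ξ₂ − ξ₁) + j_τ⁰(ξ₂; ξ₁ − ξ₂) ≤ α_τ‖ξ₁ − ξ₂‖² for all ξ₁, ξ₂ ∈ ℝ^d, with α_τ ≥ 0. Define j(η, ξ) = g_ν(η_ν) ξ_ν + g_τ(η_ν) j_τ(ξ_τ). Then for all η₁, η₂, ξ₁, ξ₂ ∈ ℝ^d: j₂⁰(η₁, ξ₁; ξ₂ − ξ₁) + j₂⁰(η₂, ξ₂; ξ₁ − ξ₂) ≤ ḡ_τ α_τ ‖ξ₁ − ξ₂‖² + (L_{g_ν} + L_{g_τ} c_τ) ‖η₁ − η₂‖ ‖ξ₁ − ξ₂‖. -/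
/-! For fixed `η`, `ξ ↦ j(η, ξ)` is the linear functional `gν(η_ν) ⟪·, ν⟫` plus the nonnegative
multiple `gτ(η_ν)` of `jτ` composed with the orthogonal projection `ξ ↦ ξ_τ` onto `ν^⊥`, hence
`j₂⁰(η, ξ; z) ≤ gν(η_ν) z_ν + gτ(η_ν) jτ⁰(ξ_τ; z_τ)`. Adding the two instances, the normal terms
combine to `(gν(η₁_ν) - gν(η₂_ν)) (ξ₂ - ξ₁)_ν`, and the tangential ones regroup as
`(gτ(η₁_ν) - gτ(η₂_ν)) jτ⁰(ξ₁_τ; ξ₂_τ - ξ₁_τ)`, controlled by `|jτ⁰(·; z)| ≤ cτ ‖z‖`, plus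
`gτ(η₂_ν)` times the relaxed-monotonicity sum of `jτ` at `ξ₁_τ, ξ₂_τ`. Since the projection is
`1`-Lipschitz, every `‖ξ₁_τ - ξ₂_τ‖` is at most `‖ξ₁ - ξ₂‖`. -/

open Filter

/-- Clarke subdifferential in a Euclidean space, identified with a set of vectors via
the inner product. -/
def clarkeSubdiffE {d : ℕ} (φ : EuclideanSpace ℝ (Fin d) → ℝ)
    (y : EuclideanSpace ℝ (Fin d)) : Set (EuclideanSpace ℝ (Fin d)) :=
  {ξ | ∀ z, (inner ℝ ξ z : ℝ) ≤ clarkeDeriv φ y z}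

/-- The contact superpotential `j(η, ξ) = g_ν(η_ν) ξ_ν + g_τ(η_ν) j_τ(ξ_τ)` where
`η_ν = η·ν` and `η_τ = η − η_ν ν`. -/
noncomputable def jcontact {d : ℕ} (ν : EuclideanSpace ℝ (Fin d))
    (gν gτ : ℝ → ℝ) (jτ : EuclideanSpace ℝ (Fin d) → ℝ)
    (η ξ : EuclideanSpace ℝ (Fin d)) : ℝ :=
  gν (inner ℝ η ν) * (inner ℝ ξ ν : ℝ) +
    gτ (inner ℝ η ν) * jτ (ξ - (inner ℝ ξ ν : ℝ) • ν)

open Filter Topology InnerProductSpace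

theorem eventually_snd_pos {T : Type*} [TopologicalSpace T] (y : T) :
    ∀ᶠ p : T × ℝ in 𝓝 y ×ˢ 𝓝[>] 0, 0 < p.2 :=
  Eventually.prod_inr self_mem_nhdsWithin _

section Clarke

variable {X Y : Type*} [NormedAddCommGroup X] [NormedSpace ℝ X]
  [NormedAddCommGroup Y] [NormedSpace ℝ Y]

noncomputable def clarkeQuotient (φ : Y → ℝ) (z : Y) (p : Y × ℝ) : ℝ :=
  (φ (p.1 + p.2 • z) - φ p.1) / p.2

theorem clarkeDeriv_eq_limsup (φ : Y → ℝ) (y z : Y) :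
    clarkeDeriv φ y z = limsup (clarkeQuotient φ z) (𝓝 y ×ˢ 𝓝[>] 0) :=
  rfl

variable {φ : Y → ℝ} {K : NNReal}

theorem abs_clarkeQuotient_le (hφ : LipschitzWith K φ) (z : Y) {p : Y × ℝ} (hp : 0 < p.2) :
    |clarkeQuotient φ z p| ≤ K * ‖z‖ := by
  rw [clarkeQuotient, abs_div, abs_of_pos hp, div_le_iff₀ hp]
  calc |φ (p.1 + p.2 • z) - φ p.1| ≤ K * ‖p.1 + p.2 • z - p.1‖ := by
        simpa only [Real.dist_eq, dist_eq_norm, Real.norm_eq_abs] using hφ.dist_le_mul _ _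
    _ = K * ‖z‖ * p.2 := by
        rw [add_sub_cancel_left, norm_smul, Real.norm_of_nonneg hp.le, mul_comm p.2, mul_assoc]

theorem eventually_abs_clarkeQuotient_le (hφ : LipschitzWith K φ) (y z : Y) :
    ∀ᶠ p in 𝓝 y ×ˢ 𝓝[>] 0, |clarkeQuotient φ z p| ≤ K * ‖z‖ :=
  (eventually_snd_pos y).mono fun _ hp => abs_clarkeQuotient_le hφ z hp

theorem isBoundedUnder_clarkeQuotient (hφ : LipschitzWith K φ) (y z : Y) :
    IsBoundedUnder (· ≤ ·) (𝓝 y ×ˢ 𝓝[>] 0) (clarkeQuotient φ z) :=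
  isBoundedUnder_of_eventually_le <|
    (eventually_abs_clarkeQuotient_le hφ y z).mono fun _ h => (abs_le.1 h).2

theorem isCoboundedUnder_clarkeQuotient (hφ : LipschitzWith K φ) (y z : Y) :
    IsCoboundedUnder (· ≤ ·) (𝓝 y ×ˢ 𝓝[>] 0) (clarkeQuotient φ z) :=
  isCoboundedUnder_le_of_eventually_le _ <|
    (eventually_abs_clarkeQuotient_le hφ y z).mono fun _ h => (abs_le.1 h).1

theorem abs_clarkeDeriv_le (hφ : LipschitzWith K φ) (y z : Y) :
    |clarkeDeriv φ y z| ≤ K * ‖z‖ := by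
  have h := eventually_abs_clarkeQuotient_le hφ y z
  refine abs_le.2 ⟨?_, ?_⟩
  · exact le_limsup_of_frequently_le (h.mono fun _ hp => (abs_le.1 hp).1).frequently
      (isBoundedUnder_clarkeQuotient hφ y z)
  · exact limsup_le_of_le (isCoboundedUnder_clarkeQuotient hφ y z)
      (h.mono fun _ hp => (abs_le.1 hp).2)

theorem clarkeDeriv_comp_le (L : X →L[ℝ] Y) (hφ : LipschitzWith K φ) (x z : X) :
    clarkeDeriv (φ ∘ L) x z ≤ clarkeDeriv φ (L x) (L z) := by
  have hquot : clarkeQuotient (φ ∘ L) z = clarkeQuotient φ (L z) ∘ Prod.map L id := by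
    ext p
    simp [clarkeQuotient]
  have hL : Tendsto (Prod.map L id) (𝓝 x ×ˢ 𝓝[>] (0 : ℝ)) (𝓝 (L x) ×ˢ 𝓝[>] 0) :=
    (L.continuous.tendsto x).prodMap tendsto_id
  have hcobdd := isCoboundedUnder_clarkeQuotient (hφ.comp L.lipschitz) x z
  rw [hquot] at hcobdd
  rw [clarkeDeriv_eq_limsup, hquot]
  exact hL.limsup_comp_le_limsup (u := clarkeQuotient φ (L z)) hcobdd
    (isBoundedUnder_clarkeQuotient hφ _ _)

theorem clarkeDeriv_const_mul {b : ℝ} (hb : 0 ≤ b) (hφ : LipschitzWith K φ) (y z : Y) :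
    clarkeDeriv (fun x => b * φ x) y z = b * clarkeDeriv φ y z := by
  have hquot : clarkeQuotient (fun x => b * φ x) z = fun p => b * clarkeQuotient φ z p := by
    ext p
    simp only [clarkeQuotient]
    ring
  rw [clarkeDeriv_eq_limsup, hquot]
  exact (Monotone.map_limsup_of_continuousAt (monotone_mul_left_of_nonneg hb) _
    (continuous_const_mul b).continuousAt (isBoundedUnder_clarkeQuotient hφ y z)
    (isCoboundedUnder_clarkeQuotient hφ y z)).symm

theorem clarkeDeriv_clm_add (ℓ : Y →L[ℝ] ℝ) (hφ : LipschitzWith K φ) (y z : Y) :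
    clarkeDeriv (fun x => ℓ x + φ x) y z = ℓ z + clarkeDeriv φ y z := by
  have hquot : clarkeQuotient (fun x => ℓ x + φ x) z =ᶠ[𝓝 y ×ˢ 𝓝[>] 0]
      fun p => ℓ z + clarkeQuotient φ z p := by
    filter_upwards [eventually_snd_pos y] with p hp
    simp only [clarkeQuotient, map_add, map_smul, smul_eq_mul]
    field_simp
    ring
  rw [clarkeDeriv_eq_limsup, limsup_congr hquot, limsup_const_add _ _ _
    (isBoundedUnder_clarkeQuotient hφ y z) (isCoboundedUnder_clarkeQuotient hφ y z),
    clarkeDeriv_eq_limsup]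

end Clarke

section UnitNormal

variable {E : Type*} [NormedAddCommGroup E] [InnerProductSpace ℝ E] {ν : E}

theorem abs_inner_le_norm_of_norm_eq_one (hν : ‖ν‖ = 1) (x : E) : |⟪x, ν⟫_ℝ| ≤ ‖x‖ := by
  simpa [hν] using abs_real_inner_le_norm x ν

theorem abs_sub_comp_inner_le {g : ℝ → ℝ} {L : ℝ} (hg : ∀ r₁ r₂, |g r₁ - g r₂| ≤ L * |r₁ - r₂|)
    (hν : ‖ν‖ = 1) (x y : E) : |g ⟪x, ν⟫_ℝ - g ⟪y, ν⟫_ℝ| ≤ L * ‖x - y‖ := by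
  have hL : 0 ≤ L := by simpa using (abs_nonneg _).trans (hg 1 0)
  calc |g ⟪x, ν⟫_ℝ - g ⟪y, ν⟫_ℝ| ≤ L * |⟪x, ν⟫_ℝ - ⟪y, ν⟫_ℝ| := hg _ _
    _ ≤ L * ‖x - y‖ := by
      rw [← inner_sub_left]
      exact mul_le_mul_of_nonneg_left (abs_inner_le_norm_of_norm_eq_one hν _) hL

theorem starProjection_orthogonal_singleton_apply (hν : ‖ν‖ = 1) (x : E) :
    (ℝ ∙ ν)ᗮ.starProjection x = x - ⟪x, ν⟫_ℝ • ν := by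
  rw [Submodule.starProjection_orthogonal_val, Submodule.starProjection_unit_singleton ℝ hν,
    real_inner_comm]

end UnitNormal

theorem mul_le_mul_of_abs_le {a b A B : ℝ} (ha : |a| ≤ A) (hb : |b| ≤ B) : a * b ≤ A * B :=
  (le_abs_self _).trans <| (abs_mul a b).trans_le <|
    mul_le_mul ha hb (abs_nonneg b) ((abs_nonneg a).trans ha)

section Contact

variable {d : ℕ} {ν : EuclideanSpace ℝ (Fin d)} {gν gτ : ℝ → ℝ}
  {jτ : EuclideanSpace ℝ (Fin d) → ℝ} {K : NNReal}

local notation "Pτ" => Submodule.starProjection (ℝ ∙ ν)ᗮ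

theorem clarkeDeriv_jcontact_le (hν : ‖ν‖ = 1) (hjτ : LipschitzWith K jτ)
    {η : EuclideanSpace ℝ (Fin d)} (hgτ : 0 ≤ gτ ⟪η, ν⟫_ℝ) (ξ z : EuclideanSpace ℝ (Fin d)) :
    clarkeDeriv (jcontact ν gν gτ jτ η) ξ z ≤
      gν ⟪η, ν⟫_ℝ * ⟪z, ν⟫_ℝ + gτ ⟪η, ν⟫_ℝ * clarkeDeriv jτ (Pτ ξ) (Pτ z) := by
  have hj : jcontact ν gν gτ jτ η =
      fun x => (gν ⟪η, ν⟫_ℝ • innerSL ℝ ν) x + gτ ⟪η, ν⟫_ℝ * (jτ ∘ Pτ) x := by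
    ext x
    simp [jcontact, starProjection_orthogonal_singleton_apply hν, real_inner_comm]
  have hjP : LipschitzWith (K * ‖Pτ‖₊) (jτ ∘ Pτ) := hjτ.comp (ContinuousLinearMap.lipschitz _)
  rw [hj, clarkeDeriv_clm_add (φ := fun x => gτ ⟪η, ν⟫_ℝ * (jτ ∘ Pτ) x) _
      ((lipschitzWith_smul (gτ ⟪η, ν⟫_ℝ)).comp hjP),
    clarkeDeriv_const_mul hgτ hjP]
  simp only [FunLike.coe_smul, Pi.smul_apply, innerSL_apply_apply, smul_eq_mul,
    real_inner_comm z ν]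
  gcongr
  exact clarkeDeriv_comp_le _ hjτ ξ z

theorem clarkeDeriv_jcontact_add_le (hν : ‖ν‖ = 1) (hgτ : ∀ r, 0 ≤ gτ r)
    (hjτ : LipschitzWith K jτ) (η₁ η₂ ξ₁ ξ₂ : EuclideanSpace ℝ (Fin d)) :
    clarkeDeriv (jcontact ν gν gτ jτ η₁) ξ₁ (ξ₂ - ξ₁) +
        clarkeDeriv (jcontact ν gν gτ jτ η₂) ξ₂ (ξ₁ - ξ₂) ≤
      (gν ⟪η₁, ν⟫_ℝ - gν ⟪η₂, ν⟫_ℝ) * ⟪ξ₂ - ξ₁, ν⟫_ℝ +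
        (gτ ⟪η₁, ν⟫_ℝ - gτ ⟪η₂, ν⟫_ℝ) * clarkeDeriv jτ (Pτ ξ₁) (Pτ ξ₂ - Pτ ξ₁) +
        gτ ⟪η₂, ν⟫_ℝ *
          (clarkeDeriv jτ (Pτ ξ₁) (Pτ ξ₂ - Pτ ξ₁) + clarkeDeriv jτ (Pτ ξ₂) (Pτ ξ₁ - Pτ ξ₂)) := by
  have h₁ := clarkeDeriv_jcontact_le (gν := gν) hν hjτ (hgτ ⟪η₁, ν⟫_ℝ) ξ₁ (ξ₂ - ξ₁)
  have h₂ := clarkeDeriv_jcontact_le (gν := gν) hν hjτ (hgτ ⟪η₂, ν⟫_ℝ) ξ₂ (ξ₁ - ξ₂)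
  rw [map_sub] at h₁ h₂
  have hν_flip : ⟪ξ₁ - ξ₂, ν⟫_ℝ = -⟪ξ₂ - ξ₁, ν⟫_ℝ := by rw [← inner_neg_left, neg_sub]
  rw [hν_flip] at h₂
  linear_combination h₁ + h₂

end Contact

theorem jcontact_relaxed_monotonicity_general
    {d : ℕ} (ν : EuclideanSpace ℝ (Fin d)) (hν : ‖ν‖ = 1)
    (gν gτ : ℝ → ℝ) (gbarτ : ℝ)
    (hgτ : ∀ r : ℝ, 0 ≤ gτ r ∧ gτ r ≤ gbarτ)
    (Lgν Lgτ : ℝ)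
    (hgνlip : ∀ r₁ r₂ : ℝ, |gν r₁ - gν r₂| ≤ Lgν * |r₁ - r₂|)
    (hgτlip : ∀ r₁ r₂ : ℝ, |gτ r₁ - gτ r₂| ≤ Lgτ * |r₁ - r₂|)
    (jτ : EuclideanSpace ℝ (Fin d) → ℝ) (cτ : ℝ)
    (hjτ : ∀ ξ₁ ξ₂ : EuclideanSpace ℝ (Fin d), |jτ ξ₁ - jτ ξ₂| ≤ cτ * ‖ξ₁ - ξ₂‖)
    (ατ : ℝ) (hατ : 0 ≤ ατ)
    (hjτmon : ∀ ξ₁ ξ₂ : EuclideanSpace ℝ (Fin d),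
      clarkeDeriv jτ ξ₁ (ξ₂ - ξ₁) + clarkeDeriv jτ ξ₂ (ξ₁ - ξ₂) ≤ ατ * ‖ξ₁ - ξ₂‖ ^ 2) :
    ∀ η₁ η₂ ξ₁ ξ₂ : EuclideanSpace ℝ (Fin d),
      clarkeDeriv (jcontact ν gν gτ jτ η₁) ξ₁ (ξ₂ - ξ₁) +
        clarkeDeriv (jcontact ν gν gτ jτ η₂) ξ₂ (ξ₁ - ξ₂) ≤
      gbarτ * ατ * ‖ξ₁ - ξ₂‖ ^ 2 + (Lgν + Lgτ * cτ) * ‖η₁ - η₂‖ * ‖ξ₁ - ξ₂‖ := by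
  intro η₁ η₂ ξ₁ ξ₂
  set P := (ℝ ∙ ν)ᗮ.starProjection
  have hcτ : 0 ≤ cτ := by simpa [hν] using (abs_nonneg _).trans (hjτ ν 0)
  have hjτL : LipschitzWith ⟨cτ, hcτ⟩ jτ := .of_dist_le_mul fun x y => by
    rw [Real.dist_eq, dist_eq_norm]
    exact hjτ x y
  have hP : ‖P ξ₂ - P ξ₁‖ ≤ ‖ξ₁ - ξ₂‖ := by
    rw [← map_sub, norm_sub_rev ξ₁]
    exact Submodule.norm_starProjection_apply_le _ _
  have hnormal : (gν ⟪η₁, ν⟫_ℝ - gν ⟪η₂, ν⟫_ℝ) * ⟪ξ₂ - ξ₁, ν⟫_ℝ ≤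
      Lgν * ‖η₁ - η₂‖ * ‖ξ₁ - ξ₂‖ :=
    mul_le_mul_of_abs_le (abs_sub_comp_inner_le hgνlip hν η₁ η₂)
      (norm_sub_rev ξ₁ ξ₂ ▸ abs_inner_le_norm_of_norm_eq_one hν _)
  have htangential : (gτ ⟪η₁, ν⟫_ℝ - gτ ⟪η₂, ν⟫_ℝ) * clarkeDeriv jτ (P ξ₁) (P ξ₂ - P ξ₁) ≤
      Lgτ * ‖η₁ - η₂‖ * (cτ * ‖ξ₁ - ξ₂‖) :=
    mul_le_mul_of_abs_le (abs_sub_comp_inner_le hgτlip hν η₁ η₂)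
      ((abs_clarkeDeriv_le hjτL _ _).trans (mul_le_mul_of_nonneg_left hP hcτ))
  have hmon : gτ ⟪η₂, ν⟫_ℝ * (clarkeDeriv jτ (P ξ₁) (P ξ₂ - P ξ₁) +
      clarkeDeriv jτ (P ξ₂) (P ξ₁ - P ξ₂)) ≤ gbarτ * (ατ * ‖ξ₁ - ξ₂‖ ^ 2) := by
    have hα : ατ * ‖P ξ₁ - P ξ₂‖ ^ 2 ≤ ατ * ‖ξ₁ - ξ₂‖ ^ 2 := by
      rw [norm_sub_rev]
      gcongr
    calc _ ≤ gτ ⟪η₂, ν⟫_ℝ * (ατ * ‖ξ₁ - ξ₂‖ ^ 2) :=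
          mul_le_mul_of_nonneg_left ((hjτmon _ _).trans hα) (hgτ _).1
      _ ≤ gbarτ * (ατ * ‖ξ₁ - ξ₂‖ ^ 2) := by gcongr; exact (hgτ _).2
  linear_combination
    clarkeDeriv_jcontact_add_le (gν := gν) hν (fun r => (hgτ r).1) hjτL η₁ η₂ ξ₁ ξ₂ +
      hnormal + htangential + hmon

/-- Pointwise relaxed-monotonicity estimate for the contact
superpotential `j`. -/
theorem jcontact_relaxed_monotonicity
    {d : ℕ} (ν : EuclideanSpace ℝ (Fin d)) (hν : ‖ν‖ = 1)
    (gν gτ : ℝ → ℝ) (gbarν gbarτ : ℝ)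
    (hgν : ∀ r : ℝ, 0 ≤ gν r ∧ gν r ≤ gbarν)
    (hgτ : ∀ r : ℝ, 0 ≤ gτ r ∧ gτ r ≤ gbarτ)
    (Lgν Lgτ : ℝ)
    (hgνlip : ∀ r₁ r₂ : ℝ, |gν r₁ - gν r₂| ≤ Lgν * |r₁ - r₂|)
    (hgτlip : ∀ r₁ r₂ : ℝ, |gτ r₁ - gτ r₂| ≤ Lgτ * |r₁ - r₂|)
    (jτ : EuclideanSpace ℝ (Fin d) → ℝ) (cτ : ℝ)
    (hjτ : ∀ ξ₁ ξ₂ : EuclideanSpace ℝ (Fin d), |jτ ξ₁ - jτ ξ₂| ≤ cτ * ‖ξ₁ - ξ₂‖)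
    (ατ : ℝ) (hατ : 0 ≤ ατ)
    (hjτmon : ∀ ξ₁ ξ₂ : EuclideanSpace ℝ (Fin d),
      clarkeDeriv jτ ξ₁ (ξ₂ - ξ₁) + clarkeDeriv jτ ξ₂ (ξ₁ - ξ₂) ≤ ατ * ‖ξ₁ - ξ₂‖ ^ 2) :
    ∀ η₁ η₂ ξ₁ ξ₂ : EuclideanSpace ℝ (Fin d),
      clarkeDeriv (jcontact ν gν gτ jτ η₁) ξ₁ (ξ₂ - ξ₁) +
        clarkeDeriv (jcontact ν gν gτ jτ η₂) ξ₂ (ξ₁ - ξ₂) ≤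
      gbarτ * ατ * ‖ξ₁ - ξ₂‖ ^ 2 + (Lgν + Lgτ * cτ) * ‖η₁ - η₂‖ * ‖ξ₁ - ξ₂‖ :=
  jcontact_relaxed_monotonicity_general ν hν gν gτ gbarτ hgτ Lgν Lgτ hgνlip hgτlip jτ cτ hjτ ατ hατ
    hjτmon
end
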